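/- Let T ≥ 1, N ≥ 1, m ≥ 1, and ε > 0. Let X be a T × N real matrix and Ω an m × N real matrix, and set Σ = X Xᵀ and Σ̂ = (X Ωᵀ)(X Ωᵀ)ᵀ = X Ωᵀ Ω Xᵀ. If ∥X Xᵀ − X Ωᵀ Ω Xᵀ∥_F ≤ ε·∥X∥_F², then, with r_τ and R defined via r_τ[M] = (1/N)·(1/(T−τ))·∑_{t=1}^{T−τ} M_{t,t+τ}, both ∥R[Σ̂] − R[Σ]∥_1 ≤ (√(1 + log T)/N)·ε·∥X∥_F² and ∥R[Σ̂] − R[Σ]∥_∞ ≤ (1/N)·ε·∥X∥_F² hold, where log is the natural logarithm. -/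

import Mathlib

/-! Since `acf N · τ` is linear, both bounds concern the autocorrelations of the error matrix
`E = X Ωᵀ Ω Xᵀ - X Xᵀ`. Cauchy–Schwarz along the `τ`-th superdiagonal `d_τ` of `E` gives
`|r_τ[E]| ≤ (1/N) (T - τ)^(-1/2) ‖d_τ‖₂`, and the superdiagonals partition the upper triangle of
`E`, so `∑_τ ‖d_τ‖₂² ≤ ‖E‖_F²`. This is the `ℓ∞` bound; a second Cauchy–Schwarz over `τ`, with
`∑_τ 1/(T - τ) = H_T ≤ 1 + log T`, is the `ℓ1` bound. -/

open Finset Matrix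

noncomputable def frob {α β : Type*} [Fintype α] [Fintype β] (M : Matrix α β ℝ) : ℝ :=
  Real.sqrt (∑ i, ∑ j, (M i j) ^ 2)

/-- Lag-`τ` autocorrelation functional
`r_τ[M] = (1/N)·(1/(T−τ))·∑_{t=1}^{T−τ} M_{t,t+τ}` (0-based indexing). -/
noncomputable def acf (N : ℕ) {T : ℕ} (M : Matrix (Fin T) (Fin T) ℝ) (τ : ℕ) : ℝ :=
  (N : ℝ)⁻¹ * (((T - τ : ℕ) : ℝ))⁻¹ *
    ∑ t : Fin T, if h : (t : ℕ) + τ < T then M t ⟨(t : ℕ) + τ, h⟩ else 0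

lemma frob_neg {α β : Type*} [Fintype α] [Fintype β] (M : Matrix α β ℝ) : frob (-M) = frob M := by
  simp only [frob, Matrix.neg_apply, neg_sq]

lemma frob_nonneg {α β : Type*} [Fintype α] [Fintype β] (M : Matrix α β ℝ) : 0 ≤ frob M :=
  Real.sqrt_nonneg _

lemma frob_sub_comm {α β : Type*} [Fintype α] [Fintype β] (A B : Matrix α β ℝ) :
    frob (A - B) = frob (B - A) := by
  rw [← neg_sub, frob_neg]

lemma sum_range_inv_sub_le_one_add_log (T : ℕ) :
    ∑ τ ∈ range T, ((T - τ : ℕ) : ℝ)⁻¹ ≤ 1 + Real.log T := by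
  rw [← sum_range_reflect]
  calc ∑ j ∈ range T, ((T - (T - 1 - j) : ℕ) : ℝ)⁻¹ = (harmonic T : ℝ) := by
        rw [harmonic, Rat.cast_sum]
        refine sum_congr rfl fun j hj ↦ ?_
        rw [show T - (T - 1 - j) = j + 1 by rw [mem_range] at hj; omega]
        push_cast
        rfl
    _ ≤ 1 + Real.log T := harmonic_le_one_add_log T

section Superdiagonals

variable {T : ℕ} {α : Type*}

def superdiag [Zero α] (M : Matrix (Fin T) (Fin T) α) (τ : ℕ) (t : Fin T) : α :=
  if h : (t : ℕ) + τ < T then M t ⟨t + τ, h⟩ else 0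

noncomputable def lagEnergy (M : Matrix (Fin T) (Fin T) ℝ) (τ : ℕ) : ℝ :=
  ∑ t, superdiag M τ t ^ 2

lemma lagEnergy_nonneg (M : Matrix (Fin T) (Fin T) ℝ) (τ : ℕ) : 0 ≤ lagEnergy M τ :=
  sum_nonneg fun _ _ ↦ sq_nonneg _

lemma superdiag_sub [SubNegZeroMonoid α] (A B : Matrix (Fin T) (Fin T) α) (τ : ℕ) (t : Fin T) :
    superdiag (A - B) τ t = superdiag A τ t - superdiag B τ t := by
  unfold superdiag
  split_ifs <;> simp

lemma card_filter_add_lt (τ : ℕ) : #{t : Fin T | (t : ℕ) + τ < T} = T - τ := by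
  rw [← card_map Fin.valEmbedding]
  convert card_range (T - τ) using 2
  ext x
  simp only [mem_map, mem_filter, mem_univ, true_and, Fin.valEmbedding_apply, mem_range]
  constructor
  · rintro ⟨t, ht, rfl⟩
    omega
  · intro hx
    exact ⟨⟨x, by omega⟩, by simp only; omega, rfl⟩

lemma sq_sum_superdiag_le (M : Matrix (Fin T) (Fin T) ℝ) (τ : ℕ) :
    (∑ t, superdiag M τ t) ^ 2 ≤ (T - τ : ℕ) * lagEnergy M τ := by
  have supp : ∀ t ∈ univ, superdiag M τ t ≠ 0 → (t : ℕ) + τ < T := by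
    intro t _ ht
    by_contra h
    exact ht (dif_neg h)
  rw [← card_filter_add_lt τ, ← sum_filter_of_ne supp, lagEnergy,
    ← sum_filter_of_ne fun t ht h ↦ supp t ht (pow_ne_zero_iff two_ne_zero |>.mp h)]
  exact sq_sum_le_card_mul_sum_sq

lemma sum_range_comp_superdiag [Zero α] {β : Type*} [AddCommMonoid β] {f : α → β} (hf : f 0 = 0)
    (M : Matrix (Fin T) (Fin T) α) (t : Fin T) :
    ∑ τ ∈ range T, f (superdiag M τ t) = ∑ t' with t ≤ t', f (M t t') := by
  symm
  refine sum_of_injOn (fun t' ↦ (t' : ℕ) - t) ?_ ?_ ?_ ?_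
  · intro a ha b hb hab
    simp only [coe_filter, mem_univ, true_and, Set.mem_ofPred_eq] at ha hb
    simp only at hab
    exact Fin.ext (by rw [Fin.le_def] at ha hb; omega)
  · intro a _
    simp only [coe_range, Set.mem_Iio]
    omega
  · intro τ _ hτ
    rw [superdiag, dif_neg, hf]
    intro h
    apply hτ
    refine ⟨⟨t + τ, h⟩, ?_, ?_⟩
    · simp only [coe_filter, mem_univ, true_and, Set.mem_ofPred_eq, Fin.le_def]
      omega
    · simp
  · intro t' ht'
    simp only [mem_filter, mem_univ, true_and, Fin.le_def] at ht'
    rw [superdiag, dif_pos (by omega)]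
    congr 3
    ext
    simp only
    omega

lemma sum_lagEnergy_le_frob_sq (M : Matrix (Fin T) (Fin T) ℝ) :
    ∑ τ ∈ range T, lagEnergy M τ ≤ frob M ^ 2 := by
  rw [frob, Real.sq_sqrt (by positivity)]
  unfold lagEnergy
  rw [sum_comm]
  gcongr with t
  rw [sum_range_comp_superdiag (f := (· ^ 2)) (zero_pow two_ne_zero)]
  exact sum_le_univ_sum_of_nonneg fun _ ↦ sq_nonneg _

lemma acf_eq_mul_sum_superdiag (N : ℕ) (M : Matrix (Fin T) (Fin T) ℝ) (τ : ℕ) :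
    acf N M τ = (N : ℝ)⁻¹ * ((T - τ : ℕ) : ℝ)⁻¹ * ∑ t, superdiag M τ t := rfl

lemma acf_sub_acf (N : ℕ) (A B : Matrix (Fin T) (Fin T) ℝ) (τ : ℕ) :
    acf N A τ - acf N B τ = acf N (A - B) τ := by
  simp only [acf_eq_mul_sum_superdiag, superdiag_sub, sum_sub_distrib]
  ring

lemma abs_acf_le (N : ℕ) (M : Matrix (Fin T) (Fin T) ℝ) (τ : ℕ) :
    |acf N M τ| ≤ (N : ℝ)⁻¹ * (√((T - τ : ℕ) : ℝ)⁻¹ * √(lagEnergy M τ)) := by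
  set c : ℝ := ((T - τ : ℕ) : ℝ)
  have hc : 0 ≤ c := Nat.cast_nonneg _
  have cauchy_schwarz : |∑ t, superdiag M τ t| ≤ √(c * lagEnergy M τ) :=
    Real.abs_le_sqrt (sq_sum_superdiag_le M τ)
  rw [acf_eq_mul_sum_superdiag, abs_mul, abs_mul, abs_inv, abs_inv, Nat.abs_cast, abs_of_nonneg hc,
    mul_assoc]
  refine mul_le_mul_of_nonneg_left ?_ (by positivity)
  calc c⁻¹ * |∑ t, superdiag M τ t| ≤ c⁻¹ * √(c * lagEnergy M τ) := by gcongr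
    _ = √c⁻¹ * √(lagEnergy M τ) := by
      rw [Real.sqrt_mul hc, ← mul_assoc, inv_mul_eq_div, Real.sqrt_div_self, Real.sqrt_inv]

lemma abs_acf_le_frob (N : ℕ) (M : Matrix (Fin T) (Fin T) ℝ) {τ : ℕ} (hτ : τ < T) :
    |acf N M τ| ≤ (N : ℝ)⁻¹ * frob M := by
  have hc : √((T - τ : ℕ) : ℝ)⁻¹ ≤ 1 := by
    rw [Real.sqrt_le_one]
    exact inv_le_one_of_one_le₀ (by norm_cast; omega)
  have hE : √(lagEnergy M τ) ≤ frob M := by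
    rw [Real.sqrt_le_left (frob_nonneg M)]
    refine le_trans ?_ (sum_lagEnergy_le_frob_sq M)
    exact single_le_sum (fun τ _ ↦ lagEnergy_nonneg M τ) (mem_range.mpr hτ)
  refine (abs_acf_le N M τ).trans ?_
  gcongr
  exact (mul_le_of_le_one_left (Real.sqrt_nonneg _) hc).trans hE

lemma sum_abs_acf_le (N : ℕ) (M : Matrix (Fin T) (Fin T) ℝ) :
    ∑ τ ∈ range T, |acf N M τ| ≤ √(1 + Real.log T) / N * frob M := by
  have hE : √(∑ τ ∈ range T, lagEnergy M τ) ≤ frob M := by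
    rw [Real.sqrt_le_left (frob_nonneg M)]
    exact sum_lagEnergy_le_frob_sq M
  calc ∑ τ ∈ range T, |acf N M τ|
      ≤ ∑ τ ∈ range T, (N : ℝ)⁻¹ * (√((T - τ : ℕ) : ℝ)⁻¹ * √(lagEnergy M τ)) :=
        sum_le_sum fun τ _ ↦ abs_acf_le N M τ
    _ = (N : ℝ)⁻¹ * ∑ τ ∈ range T, √((T - τ : ℕ) : ℝ)⁻¹ * √(lagEnergy M τ) := (mul_sum ..).symm
    _ ≤ (N : ℝ)⁻¹ * (√(∑ τ ∈ range T, ((T - τ : ℕ) : ℝ)⁻¹) *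
          √(∑ τ ∈ range T, lagEnergy M τ)) := by
        gcongr
        exact Real.sum_sqrt_mul_sqrt_le _ (fun _ ↦ by positivity) (lagEnergy_nonneg M)
    _ ≤ (N : ℝ)⁻¹ * (√(1 + Real.log T) * frob M) := by
        gcongr
        exact sum_range_inv_sub_le_one_add_log T
    _ = √(1 + Real.log T) / N * frob M := by ring

end Superdiagonals

theorem acf_sketch_error_bound_general (T N m : ℕ) (ε : ℝ)
    (X : Matrix (Fin T) (Fin N) ℝ) (Om : Matrix (Fin m) (Fin N) ℝ)
    (h : frob (X * Xᵀ - X * Omᵀ * Om * Xᵀ) ≤ ε * frob X ^ 2) :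
    (∑ τ ∈ Finset.range T, |acf N (X * Omᵀ * Om * Xᵀ) τ - acf N (X * Xᵀ) τ| ≤
        Real.sqrt (1 + Real.log T) / N * (ε * frob X ^ 2)) ∧
    ∀ τ : ℕ, τ < T →
      |acf N (X * Omᵀ * Om * Xᵀ) τ - acf N (X * Xᵀ) τ| ≤ (N : ℝ)⁻¹ * (ε * frob X ^ 2) := by
  rw [frob_sub_comm] at h
  simp only [acf_sub_acf]
  refine ⟨(sum_abs_acf_le N _).trans ?_, fun τ hτ ↦ (abs_acf_le_frob N _ hτ).trans ?_⟩ <;>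
    gcongr

/-- if `∥X Xᵀ − X Ωᵀ Ω Xᵀ∥_F ≤ ε ∥X∥_F²` then the autocorrelations computed
from the sketched data satisfy the ℓ1 bound `√(1+log T)/N · ε ∥X∥_F²` and the
ℓ∞ bound `(1/N) · ε ∥X∥_F²`. -/
theorem acf_sketch_error_bound (T N m : ℕ) (hT : 1 ≤ T) (hN : 1 ≤ N) (hm : 1 ≤ m)
    (ε : ℝ) (hε : 0 < ε)
    (X : Matrix (Fin T) (Fin N) ℝ) (Om : Matrix (Fin m) (Fin N) ℝ)
    (h : frob (X * Xᵀ - X * Omᵀ * Om * Xᵀ) ≤ ε * frob X ^ 2) :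
    (∑ τ ∈ Finset.range T, |acf N (X * Omᵀ * Om * Xᵀ) τ - acf N (X * Xᵀ) τ| ≤
        Real.sqrt (1 + Real.log T) / N * (ε * frob X ^ 2)) ∧
    ∀ τ : ℕ, τ < T →
      |acf N (X * Omᵀ * Om * Xᵀ) τ - acf N (X * Xᵀ) τ| ≤ (N : ℝ)⁻¹ * (ε * frob X ^ 2) :=
  acf_sketch_error_bound_general T N m ε X Om h
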